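/- arXiv:2403.14491 — 2 statements merged into one kernel-verified Lean document; each statement's English description precedes it below -/
import Mathlib

section
/- Let N be an orchard network and let S = (N_0, ..., N_s) be a cherry reduction sequence of N with reduced nodes u_0, ..., u_{s-1}. Then the sequence (u_0, ..., u_{s-1}) is a linear extension of the order-dual of the poset T(int N) ordered by reachability; that is, for all internal tree nodes u, v of N, if there is a directed path from v to u in N, then u appears before or at the same position as v in the sequence. -/
open Set

namespace Phylo

variable {V : Type*}

/-- In-degree of a node in a digraph given by its edge relation. -/
noncomputable def inDeg (N : V → V → Prop) (v : V) : ℕ := {u | N u v}.ncard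

/-- Out-degree of a node. -/
noncomputable def outDeg (N : V → V → Prop) (v : V) : ℕ := {w | N v w}.ncard

/-- Reachability: existence of a directed path. -/
def Reach (N : V → V → Prop) : V → V → Prop := Relation.ReflTransGen N

/-- Leaves: nodes of out-degree 0. -/
def leaves (N : V → V → Prop) : Set V := {v | outDeg N v = 0}

/-- Internal tree nodes, i.e. the set `T(int N)`. -/
def ITN (N : V → V → Prop) : Set V := {v | inDeg N v ≤ 1 ∧ 1 ≤ outDeg N v}

/-- A (rooted) phylogenetic network structure on the digraph `N` with root `ρ`. -/
structure IsPhyloNet (N : V → V → Prop) (ρ : V) : Prop where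
  acyclic : ∀ v, ¬ Relation.TransGen N v v
  root_indeg : inDeg N ρ = 0
  root_connects : ∀ v, Reach N ρ v
  retic_out : ∀ v, 2 ≤ inDeg N v → outDeg N v = 1
  no_elementary : ∀ v, ¬ (inDeg N v = 1 ∧ outDeg N v = 1)

/-- Binarity of a phylogenetic network. -/
structure IsBinary (N : V → V → Prop) (ρ : V) : Prop where
  retic_deg : ∀ v, 2 ≤ inDeg N v → inDeg N v = 2 ∧ outDeg N v = 1
  tree_deg : ∀ v, v ≠ ρ → inDeg N v ≤ 1 → 1 ≤ outDeg N v →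
      inDeg N v = 1 ∧ outDeg N v = 2
  root_deg : outDeg N ρ = 2 ∨ outDeg N ρ = 0

/-- Tree-child: every internal node has a child of tree type (in-degree ≤ 1). -/
def IsTreeChild (N : V → V → Prop) : Prop :=
  ∀ v, 1 ≤ outDeg N v → ∃ w, N v w ∧ inDeg N w ≤ 1

/-- `u` is the tree-node root of a cherry. -/
def IsCherryRoot (N : V → V → Prop) (u : V) : Prop :=
  inDeg N u ≤ 1 ∧ ∃ x y, x ≠ y ∧ N u x ∧ N u y ∧ outDeg N x = 0 ∧ outDeg N y = 0 ∧
    ∀ w, N u w → w = x ∨ w = y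

/-- `u` is the tree-node root of a reticulated cherry. -/
def IsRetCherryRoot (N : V → V → Prop) (u : V) : Prop :=
  inDeg N u ≤ 1 ∧ ∃ h y, h ≠ y ∧ N u h ∧ N u y ∧ 2 ≤ inDeg N h ∧ outDeg N y = 0 ∧
    (∃ x, N h x ∧ outDeg N x = 0 ∧ ∀ w, N h w → w = x) ∧
    ∀ w, N u w → w = h ∨ w = y

/-- Terminal node: root of a cherry or of a reticulated cherry. -/
def IsTerminal (N : V → V → Prop) (u : V) : Prop :=
  IsCherryRoot N u ∨ IsRetCherryRoot N u

/-- Cherry reduction rooted at `u`: remove all descendant edges of `u`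
(and hence all strict descendant tree nodes of `u` become isolated/removed). -/
def CR (N : V → V → Prop) (u : V) : V → V → Prop :=
  fun a b => N a b ∧ ¬ Reach N u a

/-- `IsCRSeq N L` : `L` is the list of reduced nodes of a full cherry reduction
sequence of `N`, ending in a single-node network (no edges left). -/
def IsCRSeq : (V → V → Prop) → List V → Prop
  | N, [] => ∀ a b, ¬ N a b
  | N, u :: us => IsTerminal N u ∧ IsCRSeq (CR N u) us

/-- Orchard networks: those admitting a full cherry reduction sequence. -/
def IsOrchard (N : V → V → Prop) : Prop := ∃ L, IsCRSeq N L

/-- Underlying undirected graph of a digraph. -/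
def underlying (N : V → V → Prop) : SimpleGraph V := SimpleGraph.fromRel N

/-- Cover relation of the reachability poset on internal tree nodes. -/
def Covers (N : V → V → Prop) (u v : V) : Prop :=
  u ∈ ITN N ∧ v ∈ ITN N ∧ u ≠ v ∧ Reach N u v ∧
    ¬ ∃ z ∈ ITN N, z ≠ u ∧ z ≠ v ∧ Reach N u z ∧ Reach N z v

/-- Biconnected set of nodes of an undirected graph. -/
def IsBiconn (G : SimpleGraph V) (B : Set V) : Prop :=
  B.Nonempty ∧ (G.induce B).Preconnected ∧ ∀ v ∈ B, (G.induce (B \ {v})).Preconnected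

/-- Blob: maximal biconnected component. -/
def IsBlob (G : SimpleGraph V) (B : Set V) : Prop :=
  IsBiconn G B ∧ ∀ B', IsBiconn G B' → B ⊆ B' → B' = B

/-- Level of a network: maximum number of reticulations in a blob. -/
noncomputable def level (N : V → V → Prop) : ℕ :=
  sSup {k | ∃ B, IsBlob (underlying N) B ∧ k = (B ∩ {v | 2 ≤ inDeg N v}).ncard}

/-- `H` is a minor of `G`, presented by branch sets. -/
def IsMinorOf {α β : Type*} (H : SimpleGraph β) (G : SimpleGraph α) : Prop :=
  ∃ f : β → Set α,
    (∀ b, (f b).Nonempty) ∧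
    (∀ b, (G.induce (f b)).Preconnected) ∧
    (∀ b b', b ≠ b' → Disjoint (f b) (f b')) ∧
    (∀ b b', H.Adj b b' → ∃ x ∈ f b, ∃ y ∈ f b', G.Adj x y)

/-- A list is a linear extension of the reachability poset on `T(int N)`. -/
def IsLinExtList (N : V → V → Prop) (L : List V) : Prop :=
  L.Nodup ∧ (∀ v, v ∈ L ↔ v ∈ ITN N) ∧
  ∀ (i j : ℕ) (hi : i < L.length) (hj : j < L.length),
    Reach N (L.get ⟨i, hi⟩) (L.get ⟨j, hj⟩) → i ≤ j

/-- A list is a linear extension of the order-dual of the reachability poset. -/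
def IsDualLinExtList (N : V → V → Prop) (L : List V) : Prop :=
  L.Nodup ∧ (∀ v, v ∈ L ↔ v ∈ ITN N) ∧
  ∀ (i j : ℕ) (hi : i < L.length) (hj : j < L.length),
    Reach N (L.get ⟨j, hj⟩) (L.get ⟨i, hi⟩) → i ≤ j

end Phylo

open Phylo

/-!
Induction along the sequence. Reducing a terminal node `u` deletes every edge leaving a
descendant of `u`, so each descendant loses its out-edges and drops out of `T(int N)`; by
terminality the only internal tree node below `u` is `u` itself. A node not below `u` keeps its
in- and out-neighbours, and paths between such nodes survive the reduction. Hence the nodes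
reduced after `u` are exactly the internal tree nodes of `N` other than `u`, none of them lies
below `u`, and the order constraint among them is inherited from the reduced network.
-/

namespace Phylo

variable {V : Type*} {N : V → V → Prop} {u v : V}

theorem outDeg_eq_zero_iff [Finite V] : outDeg N v = 0 ↔ ∀ w, ¬ N v w := by
  rw [outDeg, Set.ncard_eq_zero, Set.eq_empty_iff_forall_notMem]
  rfl

theorem mem_ITN_iff [Finite V] : v ∈ ITN N ↔ inDeg N v ≤ 1 ∧ ∃ w, N v w := by
  simp [ITN, Nat.one_le_iff_ne_zero, outDeg_eq_zero_iff]

theorem notMem_ITN_of_outDeg_eq_zero (h : outDeg N v = 0) : v ∉ ITN N := by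
  simp [ITN, h]

theorem notMem_ITN_of_reach_of_outDeg_eq_zero [Finite V] (h : outDeg N u = 0)
    (huv : Reach N u v) : v ∉ ITN N := by
  rcases Relation.ReflTransGen.cases_head_iff.mp huv with rfl | ⟨w, huw, -⟩
  · exact notMem_ITN_of_outDeg_eq_zero h
  · exact absurd huw (outDeg_eq_zero_iff.mp h w)

theorem notMem_ITN_CR_of_reach (h : Reach N u v) : v ∉ ITN (CR N u) :=
  notMem_ITN_of_outDeg_eq_zero <| by simp [outDeg, CR, h]

theorem mem_ITN_CR_iff (h : ¬ Reach N u v) : v ∈ ITN (CR N u) ↔ v ∈ ITN N := by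
  have hin : {a | CR N u a v} = {a | N a v} :=
    Set.ext fun a => ⟨And.left, fun hav => ⟨hav, fun hua => h (hua.tail hav)⟩⟩
  have hout : {w | CR N u v w} = {w | N v w} :=
    Set.ext fun w => ⟨And.left, fun hvw => ⟨hvw, h⟩⟩
  simp only [ITN, inDeg, outDeg, Set.mem_ofPred_eq, hin, hout]

theorem reach_CR_of_reach {a b : V} (hab : Reach N a b) (hb : ¬ Reach N u b) :
    Reach (CR N u) a b := by
  induction hab with
  | refl => exact Relation.ReflTransGen.refl
  | @tail c d _ hcd ih =>
    have hc : ¬ Reach N u c := fun huc => hb (huc.tail hcd)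
    exact (ih hc).tail ⟨hcd, hc⟩

namespace IsTerminal

theorem mem_ITN [Finite V] (hu : IsTerminal N u) : u ∈ ITN N := by
  rcases hu with ⟨hin, x, -, -, hux, -⟩ | ⟨hin, h, -, -, huh, -⟩
  · exact mem_ITN_iff.mpr ⟨hin, x, hux⟩
  · exact mem_ITN_iff.mpr ⟨hin, h, huh⟩

theorem notMem_ITN_of_reach [Finite V] (hu : IsTerminal N u) (huv : Reach N u v)
    (hvu : v ≠ u) : v ∉ ITN N := by
  obtain ⟨c, huc, hcv⟩ := (Relation.ReflTransGen.cases_head_iff.mp huv).resolve_left hvu.symm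
  rcases hu with ⟨-, x, y, -, -, -, hx, hy, hchildren⟩ |
    ⟨-, h, y, -, -, -, hh, hy, ⟨x, -, hx, hhchild⟩, hchildren⟩
  · rcases hchildren c huc with rfl | rfl
    · exact notMem_ITN_of_reach_of_outDeg_eq_zero hx hcv
    · exact notMem_ITN_of_reach_of_outDeg_eq_zero hy hcv
  · rcases hchildren c huc with rfl | rfl
    · rcases Relation.ReflTransGen.cases_head_iff.mp hcv with rfl | ⟨w, hcw, hwv⟩
      · exact fun hv => absurd hv.1 (by omega)
      · obtain rfl := hhchild w hcw
        exact notMem_ITN_of_reach_of_outDeg_eq_zero hx hwv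
    · exact notMem_ITN_of_reach_of_outDeg_eq_zero hy hcv

theorem mem_ITN_CR_iff [Finite V] (hu : IsTerminal N u) (hvu : v ≠ u) :
    v ∈ ITN (CR N u) ↔ v ∈ ITN N := by
  by_cases huv : Reach N u v
  · exact iff_of_false (notMem_ITN_CR_of_reach huv) (hu.notMem_ITN_of_reach huv hvu)
  · exact Phylo.mem_ITN_CR_iff huv

end IsTerminal

theorem isDualLinExtList_nil (hN : ∀ a b, ¬ N a b) : IsDualLinExtList N [] :=
  ⟨List.nodup_nil, fun v => by simp [ITN, outDeg, hN], fun _ _ hi => absurd hi (by simp)⟩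

theorem IsDualLinExtList.cons [Finite V] {us : List V} (hu : IsTerminal N u)
    (hus : IsDualLinExtList (CR N u) us) : IsDualLinExtList N (u :: us) := by
  obtain ⟨hnodup, hmem, hord⟩ := hus
  have hbelow : ∀ v ∈ us, ¬ Reach N u v := fun v hv huv =>
    notMem_ITN_CR_of_reach huv ((hmem v).mp hv)
  refine ⟨List.nodup_cons.mpr ⟨fun hu' => hbelow u hu' .refl, hnodup⟩, fun v => ?_, ?_⟩
  · by_cases hvu : v = u
    · simpa [hvu] using hu.mem_ITN
    · simp only [List.mem_cons, hvu, false_or, hmem, hu.mem_ITN_CR_iff hvu]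
  · rintro (_ | i) (_ | j) hi hj hji
    · exact le_rfl
    · exact Nat.zero_le _
    · exact absurd hji (hbelow _ (List.get_mem _ _))
    · exact Nat.succ_le_succ <| hord i j _ _ <|
        reach_CR_of_reach hji (hbelow _ (List.get_mem _ _))

theorem IsCRSeq.isDualLinExtList [Finite V] {L : List V} (hL : IsCRSeq N L) :
    IsDualLinExtList N L := by
  induction L generalizing N with
  | nil => exact isDualLinExtList_nil hL
  | cons u us ih => exact (ih hL.2).cons hL.1

end Phylo

theorem stmt4_general {V : Type*} [Fintype V] (N : V → V → Prop)
    (L : List V) (hL : IsCRSeq N L) :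
    IsDualLinExtList N L :=
  hL.isDualLinExtList

/-- the word of reduced nodes of any cherry reduction sequence of
an orchard network is a linear extension of the order-dual of the reachability
poset on `T(int N)`. -/
theorem stmt4 {V : Type*} [Fintype V] (N : V → V → Prop) (ρ : V)
    (hphy : IsPhyloNet N ρ) (hbin : IsBinary N ρ) (horch : IsOrchard N)
    (L : List V) (hL : IsCRSeq N L) :
    IsDualLinExtList N L :=
  stmt4_general N L hL
end

section
/- Let N be a binary phylogenetic network and H any biconnected minor of the underlying undirected graph of N. Then the level of N is at least |E(H)| - |V(H)| + 1. -/
open Set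

open Phylo

/-!
Take a model of `H` in the underlying graph `G` of `N` whose branch sets cover as few vertices
as possible. Their union `W` is biconnected: if deleting a vertex `v` cut off a piece of a branch
set from the rest of `W`, that piece could be dropped from the model. So `W` lies in a blob.
Spanning trees of the branch sets together with one edge per edge of `H` give
`|E(H)| - |V(H)| ≤ |E(G[W])| - |W|`. Orienting the edges of `G[W]` as in `N`, a source of `W`
is the head of no edge, a reticulation of at most two and every other vertex of at most one, so
`|E(G[W])| - |W| + 1` is at most the number of reticulations in `W`, hence in its blob.
-/

open scoped Function

namespace SimpleGraph

variable {V : Type*} {G : SimpleGraph V} {S T : Set V} {x y z : V}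

def ReachableIn (G : SimpleGraph V) (S : Set V) (x y : V) : Prop :=
  ∃ (hx : x ∈ S) (hy : y ∈ S), (G.induce S).Reachable ⟨x, hx⟩ ⟨y, hy⟩

namespace ReachableIn

lemma right_mem (h : G.ReachableIn S x y) : y ∈ S := h.2.1

lemma refl (hx : x ∈ S) : G.ReachableIn S x x := ⟨hx, hx, .rfl⟩

lemma symm (h : G.ReachableIn S x y) : G.ReachableIn S y x :=
  let ⟨hx, hy, h⟩ := h; ⟨hy, hx, h.symm⟩

lemma trans (hxy : G.ReachableIn S x y) (hyz : G.ReachableIn S y z) : G.ReachableIn S x z :=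
  let ⟨hx, _, h₁⟩ := hxy; let ⟨_, hz, h₂⟩ := hyz; ⟨hx, hz, h₁.trans h₂⟩

lemma mono (hST : S ⊆ T) (h : G.ReachableIn S x y) : G.ReachableIn T x y :=
  let ⟨hx, hy, h⟩ := h; ⟨hST hx, hST hy, h.map (G.induceHomOfLE hST).toHom⟩

end ReachableIn

lemma Adj.reachableIn (h : G.Adj x y) (hx : x ∈ S) (hy : y ∈ S) : G.ReachableIn S x y :=
  ⟨hx, hy, Adj.reachable (by simpa using h)⟩

lemma preconnected_induce_iff_reachableIn :
    (G.induce S).Preconnected ↔ ∀ x ∈ S, ∀ y ∈ S, G.ReachableIn S x y :=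
  ⟨fun h _ hx _ hy => ⟨hx, hy, h _ _⟩, fun h x y => (h x x.2 y y.2).2.2⟩

lemma preconnected_induce_of_forall_reachableIn (hTS : T ⊆ S) (hT : (G.induce T).Preconnected)
    (h : ∀ x ∈ S, ∃ y ∈ T, G.ReachableIn S x y) : (G.induce S).Preconnected := by
  rw [preconnected_induce_iff_reachableIn] at hT ⊢
  intro x hx y hy
  obtain ⟨x', hx', hxx'⟩ := h x hx
  obtain ⟨y', hy', hyy'⟩ := h y hy
  exact hxx'.trans (((hT x' hx' y' hy').mono hTS).trans hyy'.symm)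

lemma preconnected_induce_iUnion {ι : Type*} {H : SimpleGraph ι} (hH : H.Preconnected)
    {f : ι → Set V} (hf : ∀ i, (G.induce (f i)).Preconnected)
    (hadj : ∀ i j, H.Adj i j → ∃ x ∈ f i, ∃ y ∈ f j, G.Adj x y) :
    (G.induce (⋃ i, f i)).Preconnected := by
  simp only [preconnected_induce_iff_reachableIn] at hf ⊢
  have hwalk : ∀ i j, H.Walk i j → ∀ x ∈ f i, ∀ y ∈ f j, G.ReachableIn (⋃ i, f i) x y := by
    intro i j p
    induction p with
    | nil => exact fun x hx y hy => (hf _ x hx y hy).mono (subset_iUnion f _)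
    | cons hik _ ih =>
      intro x hx y hy
      obtain ⟨x', hx', y', hy', hx'y'⟩ := hadj _ _ hik
      exact ((hf _ x hx x' hx').mono (subset_iUnion f _)).trans <|
        (hx'y'.reachableIn (mem_iUnion_of_mem _ hx') (mem_iUnion_of_mem _ hy')).trans
          (ih y' hy' y hy)
  intro x hx y hy
  obtain ⟨i, hi⟩ := mem_iUnion.1 hx
  obtain ⟨j, hj⟩ := mem_iUnion.1 hy
  exact hwalk i j (hH i j).some x hi y hj

/-- A path in `A` from a vertex outside `C` towards `v` cannot enter `C` before reaching `v`. -/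
lemma preconnected_induce_sdiff {A C : Set V} {v : V} (hA : (G.induce A).Preconnected) (hv : v ∈ A)
    (hvC : v ∉ C) (hC : ∀ c ∈ C, ∀ a ∈ A, a ≠ v → G.Adj a c → a ∈ C) :
    (G.induce (A \ C)).Preconnected := by
  have hwalk : ∀ p q : A, (G.induce A).Walk p q → q.1 = v → p.1 ∉ C →
      G.ReachableIn (A \ C) p v := by
    intro p q w
    induction w with
    | nil => rintro rfl _; exact .refl ⟨hv, hvC⟩
    | @cons p r q hpr _ ih =>
      intro hq hp
      by_cases hpv : p.1 = v
      · rw [hpv]; exact .refl ⟨hv, hvC⟩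
      have hpr' : G.Adj p r := by simpa using hpr
      have hr : r.1 ∉ C := fun hr => hp (hC _ hr _ p.2 hpv hpr')
      exact (hpr'.reachableIn (S := A \ C) ⟨p.2, hp⟩ ⟨r.2, hr⟩).trans (ih hq hr)
  have hreach : ∀ x ∈ A \ C, G.ReachableIn (A \ C) x v := fun x hx =>
    hwalk ⟨x, hx.1⟩ ⟨v, hv⟩ (hA _ _).some rfl hx.2
  rw [preconnected_induce_iff_reachableIn]
  exact fun x hx y hy => (hreach x hx).trans (hreach y hy).symm

lemma ncard_le_ncard_edgeSet_inter_sym2_add_one [Finite V] (hS : (G.induce S).Connected) :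
    S.ncard ≤ (G.edgeSet ∩ S.sym2).ncard + 1 := by
  have hinj : ((G.induce S).edgeSet).ncard ≤ (G.edgeSet ∩ S.sym2).ncard := by
    refine ncard_le_ncard_of_injOn (Sym2.map Subtype.val) ?_
      (Sym2.map.injective Subtype.val_injective).injOn
    intro e he
    induction e using Sym2.ind with
    | _ x y => exact ⟨by simpa using he, by simp⟩
  have := hS.card_vert_le_card_edgeSet_add_one
  rw [Nat.card_coe_set_eq, Nat.card_coe_set_eq] at this
  omega

variable {β : Type*} {H : SimpleGraph β} {f : β → Set V}

structure IsMinorModel (G : SimpleGraph V) (H : SimpleGraph β) (f : β → Set V) : Prop where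
  nonempty : ∀ b, (f b).Nonempty
  preconnected : ∀ b, (G.induce (f b)).Preconnected
  disjoint : Pairwise (Disjoint on f)
  exists_adj : ∀ b b', H.Adj b b' → ∃ x ∈ f b, ∃ y ∈ f b', G.Adj x y

namespace IsMinorModel

lemma eq_of_mem (hf : G.IsMinorModel H f) {x : V} {b b' : β} (hb : x ∈ f b) (hb' : x ∈ f b') :
    b = b' :=
  by_contra fun hne => Set.disjoint_left.1 (hf.disjoint hne) hb hb'

lemma preconnected_induce_iUnion (hf : G.IsMinorModel H f) (hH : H.Preconnected) :
    (G.induce (⋃ b, f b)).Preconnected :=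
  SimpleGraph.preconnected_induce_iUnion hH hf.preconnected hf.exists_adj

lemma sdiff (hf : G.IsMinorModel H f) {b₀ : β} {v : V} {C : Set V} (hCb₀ : C ⊆ f b₀)
    (hv : v ∈ f b₀) (hvC : v ∉ C) (hC : ∀ c ∈ C, ∀ a ∈ f b₀, a ≠ v → G.Adj a c → a ∈ C)
    (hsep : ∀ c ∈ C, ∀ b ≠ b₀, ∀ y ∈ f b, ¬ G.Adj c y) :
    G.IsMinorModel H (fun b => f b \ C) := by
  have hother : ∀ b ≠ b₀, f b \ C = f b := fun b hb =>
    sdiff_eq_left.2 ((hf.disjoint hb).mono_right hCb₀)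
  have hcases : ∀ b, b = b₀ ∨ f b \ C = f b := fun b => (eq_or_ne b b₀).imp_right (hother b)
  refine ⟨fun b => ?_, fun b => ?_,
    fun b b' hbb' => (hf.disjoint hbb').mono sdiff_subset sdiff_subset, fun b b' hbb' => ?_⟩
  · obtain rfl | h := hcases b
    · exact ⟨v, hv, hvC⟩
    · rw [h]; exact hf.nonempty b
  · obtain rfl | h := hcases b
    · exact preconnected_induce_sdiff (hf.preconnected b) hv hvC hC
    · rw [h]; exact hf.preconnected b
  · obtain ⟨x, hx, y, hy, hxy⟩ := hf.exists_adj b b' hbb'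
    have hxC : x ∉ C := fun hxC => by
      obtain rfl := hf.eq_of_mem hx (hCb₀ hxC)
      exact hsep x hxC b' hbb'.ne.symm y hy hxy
    have hyC : y ∉ C := fun hyC => by
      obtain rfl := hf.eq_of_mem hy (hCb₀ hyC)
      exact hsep y hyC b hbb'.ne x hx hxy.symm
    exact ⟨x, ⟨hx, hxC⟩, y, ⟨hy, hyC⟩, hxy⟩

/-- Otherwise the component of `x` in `G[f b₀ \ {v}]` could be cut off from `f b₀` by
`IsMinorModel.sdiff`, leaving a smaller model. -/
lemma exists_reachableIn_adj_of_minimal [Finite V] (hf : G.IsMinorModel H f)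
    (hmin : ∀ g, G.IsMinorModel H g → (⋃ b, f b).ncard ≤ (⋃ b, g b).ncard)
    {b₀ : β} {v x : V} (hv : v ∈ f b₀) (hx : x ∈ f b₀ \ {v}) :
    ∃ y, G.ReachableIn (f b₀ \ {v}) x y ∧ ∃ b ≠ b₀, ∃ z ∈ f b, G.Adj y z := by
  by_contra! hsep
  set C := {y | G.ReachableIn (f b₀ \ {v}) x y}
  have hCsub : ∀ y ∈ C, y ∈ f b₀ \ {v} := fun _ hy => ReachableIn.right_mem hy
  have hCb₀ : C ⊆ f b₀ := fun y hy => (hCsub y hy).1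
  have hvC : v ∉ C := fun h => (hCsub v h).2 rfl
  have hC : ∀ c ∈ C, ∀ a ∈ f b₀, a ≠ v → G.Adj a c → a ∈ C := fun c hc a ha hav hac =>
    ReachableIn.trans hc (hac.symm.reachableIn (hCsub c hc) ⟨ha, hav⟩)
  have hg := hf.sdiff hCb₀ hv hvC hC hsep
  have hlt : (⋃ b, f b \ C).ncard < (⋃ b, f b).ncard := by
    rw [← iUnion_sdiff]
    exact ncard_lt_ncard (sdiff_ssubset_left_iff.2 ⟨x, mem_iUnion_of_mem b₀ hx.1, .refl hx⟩)
  exact (hmin _ hg).not_gt hlt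

lemma preconnected_induce_iUnion_sdiff_singleton_of_minimal [Finite V] (hf : G.IsMinorModel H f)
    (hmin : ∀ g, G.IsMinorModel H g → (⋃ b, f b).ncard ≤ (⋃ b, g b).ncard)
    (hH : ∀ b, (H.induce {w | w ≠ b}).Preconnected) {v : V} (hv : v ∈ ⋃ b, f b) :
    (G.induce ((⋃ b, f b) \ {v})).Preconnected := by
  obtain ⟨b₀, hvb₀⟩ := mem_iUnion.1 hv
  set T := ⋃ b : {w | w ≠ b₀}, f b
  have hT : (G.induce T).Preconnected :=
    SimpleGraph.preconnected_induce_iUnion (hH b₀) (fun b => hf.preconnected b)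
      fun b b' hbb' => hf.exists_adj b b' (by simpa using hbb')
  have hTmem : ∀ b ≠ b₀, ∀ x ∈ f b, x ∈ (⋃ b, f b) \ {v} := fun b hb x hx =>
    ⟨mem_iUnion_of_mem b hx, fun hxv => hb (hf.eq_of_mem hx ((mem_singleton_iff.1 hxv) ▸ hvb₀))⟩
  refine preconnected_induce_of_forall_reachableIn ?_ hT fun x hx => ?_
  · intro x hx
    obtain ⟨⟨b, hb⟩, hxb⟩ := mem_iUnion.1 hx
    exact hTmem b hb x hxb
  obtain ⟨b, hxb⟩ := mem_iUnion.1 hx.1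
  by_cases hb : b = b₀
  · subst hb
    obtain ⟨y, hxy, b', hb', z, hz, hyz⟩ :=
      hf.exists_reachableIn_adj_of_minimal hmin hvb₀ ⟨hxb, hx.2⟩
    have hyW : y ∈ (⋃ b, f b) \ {v} :=
      ⟨mem_iUnion_of_mem b hxy.right_mem.1, hxy.right_mem.2⟩
    refine ⟨z, mem_iUnion_of_mem ⟨b', hb'⟩ hz, ?_⟩
    exact (hxy.mono (sdiff_subset_sdiff_left (subset_iUnion f b))).trans
      (hyz.reachableIn hyW (hTmem b' hb' z hz))
  · exact ⟨x, mem_iUnion_of_mem ⟨b, hb⟩ hxb, .refl hx⟩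

/-- Contracting the branch sets maps the edges between different branch sets onto the edges
of `H`. -/
lemma ncard_edgeSet_le [Finite V] (hf : G.IsMinorModel H f) :
    H.edgeSet.ncard ≤ ((G.edgeSet ∩ (⋃ b, f b).sym2) \ ⋃ b, (f b).sym2).ncard := by
  rcases isEmpty_or_nonempty β with hβ | hβ
  · have : H.edgeSet = ∅ := by
      ext e
      induction e using Sym2.ind with | _ b => exact isEmptyElim b
    simp [this]
  let π : V → β := fun x => Classical.epsilon (x ∈ f ·)
  have hπ : ∀ b, ∀ x ∈ f b, π x = b := fun b x hx =>
    hf.eq_of_mem (Classical.epsilon_spec (p := (x ∈ f ·)) ⟨b, hx⟩) hx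
  refine (ncard_le_ncard (fun e he => ?_) (toFinite _)).trans (ncard_image_le (f := Sym2.map π))
  induction e using Sym2.ind with
  | _ b b' =>
    obtain ⟨x, hx, y, hy, hxy⟩ := hf.exists_adj b b' he
    refine ⟨s(x, y), ⟨⟨hxy, mem_iUnion_of_mem b hx, mem_iUnion_of_mem b' hy⟩, ?_⟩, by
      simp [hπ b x hx, hπ b' y hy]⟩
    simp only [mem_iUnion, mk_mem_sym2_iff, not_exists, not_and]
    exact fun c hxc hyc => (H.ne_of_adj he) ((hf.eq_of_mem hx hxc).trans (hf.eq_of_mem hy hyc).symm)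

lemma ncard_edgeSet_add_ncard_iUnion_le [Finite V] [Fintype β] (hf : G.IsMinorModel H f) :
    H.edgeSet.ncard + (⋃ b, f b).ncard ≤
      (G.edgeSet ∩ (⋃ b, f b).sym2).ncard + Fintype.card β := by
  set W := ⋃ b, f b
  have hsym2 : Pairwise (Disjoint on fun b => G.edgeSet ∩ (f b).sym2) := fun b b' h => by
    refine Disjoint.mono inter_subset_right inter_subset_right ?_
    rw [disjoint_iff_inter_eq_empty, ← sym2_inter, disjoint_iff_inter_eq_empty.1 (hf.disjoint h),
      sym2_empty]
  have hW : W.ncard = ∑ b, (f b).ncard := by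
    rw [ncard_iUnion_of_finite (fun _ => toFinite _) hf.disjoint, finsum_eq_sum_of_fintype]
  have hintra : (G.edgeSet ∩ W.sym2 ∩ ⋃ b, (f b).sym2).ncard =
      ∑ b, (G.edgeSet ∩ (f b).sym2).ncard := by
    rw [← finsum_eq_sum_of_fintype, ← ncard_iUnion_of_finite (fun _ => toFinite _) hsym2,
      inter_iUnion]
    refine congrArg ncard (iUnion_congr fun b => ?_)
    rw [inter_assoc, inter_eq_right.2 fun e he =>
      mem_sym2_iff_subset.2 ((mem_sym2_iff_subset.1 he).trans (subset_iUnion f b))]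
  have hbranch : ∀ b, (f b).ncard ≤ (G.edgeSet ∩ (f b).sym2).ncard + 1 := fun b =>
    have := (hf.nonempty b).to_subtype
    ncard_le_ncard_edgeSet_inter_sym2_add_one ⟨hf.preconnected b⟩
  have hsum := Finset.sum_le_sum fun b (_ : b ∈ Finset.univ) => hbranch b
  rw [Finset.sum_add_distrib, Finset.sum_const, Finset.card_univ, smul_eq_mul, mul_one] at hsum
  have hsplit := ncard_inter_add_ncard_sdiff_eq_ncard (G.edgeSet ∩ W.sym2) (⋃ b, (f b).sym2)
  have hinter : H.edgeSet.ncard ≤ ((G.edgeSet ∩ W.sym2) \ ⋃ b, (f b).sym2).ncard :=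
    hf.ncard_edgeSet_le
  omega

end IsMinorModel

end SimpleGraph

namespace Phylo

variable {V β : Type*}

lemma exists_forall_not_rel_of_acyclic [Finite V] {N : V → V → Prop}
    (hacyc : ∀ v, ¬ Relation.TransGen N v v) {W : Set V} (hW : W.Nonempty) :
    ∃ m ∈ W, ∀ u ∈ W, ¬ N u m := by
  have : Std.Irrefl (Relation.TransGen N) := ⟨hacyc⟩
  obtain ⟨m, hm, hmin⟩ := (Finite.wellFounded_of_trans_of_irrefl (Relation.TransGen N)).has_min W hW
  exact ⟨m, hm, fun u hu h => hmin u hu (.single h)⟩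

lemma IsBinary.inDeg_le_two {N : V → V → Prop} {ρ : V} (hbin : IsBinary N ρ) (v : V) :
    inDeg N v ≤ 2 := by
  by_cases hv : 2 ≤ inDeg N v
  · exact (hbin.retic_deg v hv).1.le
  · omega

/-- Orient each edge inside `W` towards its head: a source `m` of `W` is the head of none of them,
every other vertex of `W` of at most one, except reticulations, which are heads of at most two. -/
lemma ncard_edgeSet_underlying_inter_sym2_add_one_le [Finite V] {N : V → V → Prop}
    (hacyc : ∀ v, ¬ Relation.TransGen N v v) (hdeg : ∀ v, inDeg N v ≤ 2) {W : Set V}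
    (hW : W.Nonempty) :
    ((underlying N).edgeSet ∩ W.sym2).ncard + 1 ≤ W.ncard + (W ∩ {v | 2 ≤ inDeg N v}).ncard := by
  classical
  have := Fintype.ofFinite V
  obtain ⟨m, hmW, hm⟩ := exists_forall_not_rel_of_acyclic hacyc hW
  set t := (W \ {m}).toFinset
  have hsub : (underlying N).edgeSet ∩ W.sym2 ⊆ ⋃ v ∈ t, (s(·, v)) '' {u | N u v} := by
    rintro e ⟨he, heW⟩
    induction e using Sym2.ind with
    | _ x y =>
      obtain ⟨hx, hy⟩ := heW
      simp only [t, mem_iUnion, Set.mem_toFinset, mem_image, exists_prop]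
      rcases (SimpleGraph.fromRel_adj _ _ _).1 he |>.2 with h | h
      · exact ⟨y, ⟨hy, fun hym => hm x hx (by rwa [← mem_singleton_iff.1 hym])⟩, x, h, rfl⟩
      · exact ⟨x, ⟨hx, fun hxm => hm y hy (by rwa [← mem_singleton_iff.1 hxm])⟩, y, h,
          Sym2.eq_swap⟩
  have hfilter : (t.filter (2 ≤ inDeg N ·)).card ≤ (W ∩ {v | 2 ≤ inDeg N v}).ncard := by
    rw [← ncard_coe_finset]
    exact ncard_le_ncard fun v hv => by simp_all [t]
  have ht : t.card + 1 = W.ncard := by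
    rw [← ncard_eq_toFinset_card', ncard_sdiff_singleton_add_one hmW]
  calc ((underlying N).edgeSet ∩ W.sym2).ncard + 1
      ≤ ∑ v ∈ t, inDeg N v + 1 := by
        gcongr
        exact (ncard_le_ncard hsub).trans <| (t.set_ncard_biUnion_le _).trans <|
          Finset.sum_le_sum fun v _ => ncard_image_le (toFinite _)
    _ ≤ ∑ v ∈ t, (1 + if 2 ≤ inDeg N v then 1 else 0) + 1 := by
        gcongr with v
        have := hdeg v
        split_ifs <;> omega
    _ = t.card + (t.filter (2 ≤ inDeg N ·)).card + 1 := by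
        rw [Finset.sum_add_distrib, Finset.card_filter]
        simp
    _ ≤ W.ncard + (W ∩ {v | 2 ≤ inDeg N v}).ncard := by omega

lemma IsBiconn.exists_isBlob_superset [Finite V] {G : SimpleGraph V} {W : Set V}
    (hW : IsBiconn G W) : ∃ B, IsBlob G B ∧ W ⊆ B := by
  obtain ⟨B, hWB, hB⟩ := (toFinite {B | IsBiconn G B}).exists_le_maximal hW
  exact ⟨B, ⟨hB.prop, fun _ hB' hBB' => hB.eq_of_superset hB' hBB'⟩, hWB⟩

lemma ncard_inter_le_level [Finite V] {N : V → V → Prop} {B : Set V}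
    (hB : IsBlob (underlying N) B) : (B ∩ {v | 2 ≤ inDeg N v}).ncard ≤ level N :=
  le_csSup ⟨Nat.card V, by rintro k ⟨B', -, rfl⟩; exact ncard_le_card _⟩ ⟨B, hB, rfl⟩

lemma IsMinorOf.exists_minimal_model {G : SimpleGraph V} {H : SimpleGraph β}
    (h : IsMinorOf H G) : ∃ f, G.IsMinorModel H f ∧
      ∀ g, G.IsMinorModel H g → (⋃ b, f b).ncard ≤ (⋃ b, g b).ncard := by
  obtain ⟨f, h₁, h₂, h₃, h₄⟩ := h
  obtain ⟨f, hf, hmin⟩ := (measure fun g : β → Set V => (⋃ b, g b).ncard).wf.has_min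
    {g | G.IsMinorModel H g} ⟨f, h₁, h₂, fun b b' hbb' => h₃ b b' hbb', h₄⟩
  exact ⟨f, hf, fun g hg => not_lt.1 (hmin g hg)⟩

lemma _root_.SimpleGraph.IsMinorModel.isBiconn_iUnion_of_minimal [Finite V] [Nonempty β]
    {G : SimpleGraph V} {H : SimpleGraph β} {f : β → Set V} (hf : G.IsMinorModel H f)
    (hmin : ∀ g, G.IsMinorModel H g → (⋃ b, f b).ncard ≤ (⋃ b, g b).ncard)
    (hH : H.Preconnected) (hbic : ∀ b, (H.induce {w | w ≠ b}).Preconnected) :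
    IsBiconn G (⋃ b, f b) :=
  ⟨(hf.nonempty (Classical.arbitrary β)).mono (subset_iUnion f _),
    hf.preconnected_induce_iUnion hH,
    fun _ hv => hf.preconnected_induce_iUnion_sdiff_singleton_of_minimal hmin hbic hv⟩

end Phylo

/-- if `H` is a biconnected minor of (the underlying graph of) a
binary phylogenetic network `N`, then `level N ≥ |E(H)| - |V(H)| + 1`. -/
theorem stmt13 {V : Type*} [Fintype V] {β : Type*} [Fintype β]
    (N : V → V → Prop) (ρ : V)
    (hphy : IsPhyloNet N ρ) (hbin : IsBinary N ρ)
    (H : SimpleGraph β)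
    (hne : Nonempty β) (hconn : H.Preconnected)
    (hbic : ∀ v : β, (H.induce {w | w ≠ v}).Preconnected)
    (hminor : IsMinorOf H (underlying N)) :
    (H.edgeSet.ncard : ℤ) - (Fintype.card β : ℤ) + 1 ≤ (level N : ℤ) := by
  obtain ⟨f, hf, hmin⟩ := hminor.exists_minimal_model
  have hW : IsBiconn (underlying N) (⋃ b, f b) := hf.isBiconn_iUnion_of_minimal hmin hconn hbic
  obtain ⟨B, hB, hWB⟩ := hW.exists_isBlob_superset
  have hminor_count := hf.ncard_edgeSet_add_ncard_iUnion_le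
  have hcycles := ncard_edgeSet_underlying_inter_sym2_add_one_le hphy.acyclic hbin.inDeg_le_two hW.1
  have hretic : ((⋃ b, f b) ∩ {v | 2 ≤ inDeg N v}).ncard ≤ (B ∩ {v | 2 ≤ inDeg N v}).ncard :=
    ncard_le_ncard (inter_subset_inter_left _ hWB)
  have hlevel := ncard_inter_le_level hB
  omega
end
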